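/- Let m ∈ {n−1, n} and let y, w ∈ Área_n. Then ρ_m(y) = ρ_m(w) if and only if { j : 1 ≤ j ≤ m and ℓ(y·t_j) < ℓ(y) } = { j : 1 ≤ j ≤ m and ℓ(w·t_j) < ℓ(w) }. (This is the statement that for b/a > n−2, the intersections of ρ^Ξ with {t_1,…,t_n} already determine ρ^Ξ on Área_n.) -/

import Mathlib

namespace BnPaper

/-- The generator `t`: swaps `1` and `-1`, fixing all other points. -/
def t : Equiv.Perm ℤ := Equiv.swap 1 (-1)

/-- The generator `s i`: swaps `i ↔ i+1` and `-i ↔ -(i+1)`. -/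
def s (i : ℤ) : Equiv.Perm ℤ := Equiv.swap i (i + 1) * Equiv.swap (-i) (-(i + 1))

/-- The descending product `s_j · s_{j-1} ⋯ s_i` (the identity when `i > j`). -/
def desc (i j : ℕ) : Equiv.Perm ℤ :=
  ((List.range (j + 1 - i)).map (fun k => s ((j : ℤ) - (k : ℤ)))).prod

/-- The ascending product `s_i · s_{i+1} ⋯ s_j` (the identity when `i > j`). -/
def asc (i j : ℕ) : Equiv.Perm ℤ :=
  ((List.range (j + 1 - i)).map (fun k => s ((i : ℤ) + (k : ℤ)))).prod

/-- `t_j = s_{j-1} ⋯ s_1 · t · s_1 ⋯ s_{j-1}`. -/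
def tt (j : ℕ) : Equiv.Perm ℤ := desc 1 (j - 1) * t * (desc 1 (j - 1))⁻¹

/-- The Coxeter generating set `{t, s_1, …, s_{n-1}}` of `W_n`. -/
def gens (n : ℕ) : Set (Equiv.Perm ℤ) :=
  insert t {g | ∃ i : ℕ, 1 ≤ i ∧ i ≤ n - 1 ∧ g = s (i : ℤ)}

/-- The Coxeter length: the least number of generators whose product is `w`. -/
noncomputable def len (n : ℕ) (w : Equiv.Perm ℤ) : ℕ :=
  sInf {k | ∃ l : List (Equiv.Perm ℤ), l.length = k ∧ (∀ g ∈ l, g ∈ gens n) ∧ l.prod = w}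

/-- `W_n` realised as the signed permutations of `{-n, …, -1, 1, …, n}`:
permutations of `ℤ` that are odd (`w(-i) = -w(i)`) and fix everything beyond `n` in
absolute value. -/
def W (n : ℕ) : Set (Equiv.Perm ℤ) :=
  {w | (∀ i : ℤ, w (-i) = -(w i)) ∧ ∀ i : ℤ, (n : ℤ) < |i| → w i = i}

/-- The right descent set `Des(w)`. -/
def Des (n : ℕ) (w : Equiv.Perm ℤ) : Set (Equiv.Perm ℤ) :=
  {g | g ∈ gens n ∧ len n (w * g) < len n w}

/-- The enhanced descent-set invariant
`ρ_m(w) = Des(w) ∪ {t_j : 2 ≤ j ≤ m, ℓ(w t_j) < ℓ(w)}`. -/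
def rho (n m : ℕ) (w : Equiv.Perm ℤ) : Set (Equiv.Perm ℤ) :=
  Des n w ∪ {g | ∃ j : ℕ, 2 ≤ j ∧ j ≤ m ∧ g = tt j ∧ len n (w * tt j) < len n w}

/-- `Área_n`: the negative entries of the row form appear in increasing order and
the positive entries in strictly decreasing order. -/
def Area (n : ℕ) : Set (Equiv.Perm ℤ) :=
  {w | w ∈ W n ∧ ∀ i j : ℤ, 1 ≤ i → i < j → j ≤ (n : ℤ) →
    (w i < 0 → w j < 0 → w i < w j) ∧ (0 < w i → 0 < w j → w j < w i)}

/-- The suffix relation `y ≤_e w`: `w = z · y` with `ℓ(w) = ℓ(z) + ℓ(y)`. -/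
def Suf (n : ℕ) (y w : Equiv.Perm ℤ) : Prop :=
  ∃ z, z ∈ W n ∧ w = z * y ∧ len n w = len n z + len n y

/-- `a_q = (t)(s_1 t)(s_2 s_1 t) ⋯ (s_{q-1} ⋯ s_1 t)`. -/
def aw (q : ℕ) : Equiv.Perm ℤ := ((List.range q).map (fun k => desc 1 k * t)).prod

/-- `b_q = (s_{q+1})(s_{q+2} s_{q+1}) ⋯ (s_{n-1} ⋯ s_{q+1})` (identity for `q ≥ n-1`). -/
def bw (n q : ℕ) : Equiv.Perm ℤ :=
  ((List.range (n - 1 - q)).map (fun k => desc (q + 1) (q + 1 + k))).prod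

/-- `σ_{n,q} = a_q · b_q`. -/
def sig (n q : ℕ) : Equiv.Perm ℤ := aw q * bw n q

/-- `p_{n,q} = (s_{n-q} ⋯ s_1)(s_{n-q+1} ⋯ s_2) ⋯ (s_{n-1} ⋯ s_q)`,
with `p_{n,0} = p_{n,n} = e`. -/
def p (n q : ℕ) : Equiv.Perm ℤ :=
  ((List.range q).map (fun m => desc (1 + m) (n - q + m))).prod

/-- `Π_{n,q} = (s_{n-q-1} ⋯ s_1) · t · p_{n,q}`. -/
def PiElt (n q : ℕ) : Equiv.Perm ℤ := desc 1 (n - q - 1) * t * p n q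

/-- `Υ(w) = {z ∈ Área_n : Des(z) = Des(w)}`. -/
def Ups (n : ℕ) (w : Equiv.Perm ℤ) : Set (Equiv.Perm ℤ) :=
  {z | z ∈ Area n ∧ Des n z = Des n w}

/-- The parabolic subgroup `W_J = ⟨s_1, …, s_{n-1}⟩`. -/
def WJ (n : ℕ) : Set (Equiv.Perm ℤ) :=
  ↑(Subgroup.closure {g | ∃ i : ℕ, 1 ≤ i ∧ i ≤ n - 1 ∧ g = s (i : ℤ)})

/-- The parabolic subgroup `W_K = ⟨t, s_1, …, s_{n-2}⟩`. -/
def WK (n : ℕ) : Set (Equiv.Perm ℤ) :=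
  ↑(Subgroup.closure (insert t {g | ∃ i : ℕ, 1 ≤ i ∧ i ≤ n - 2 ∧ g = s (i : ℤ)}))

/-- Knuth relation of type `I_k` : `w' = w · s_{i+1}` when
`w(i+1) < w(i) < w(i+2)` or `w(i+2) < w(i) < w(i+1)`. -/
def stepI (k : ℕ) (w w' : Equiv.Perm ℤ) : Prop :=
  ∃ i : ℤ, 1 ≤ i ∧ i ≤ (k : ℤ) - 2 ∧
    ((w (i + 1) < w i ∧ w i < w (i + 2)) ∨ (w (i + 2) < w i ∧ w i < w (i + 1))) ∧
    w' = w * s (i + 1)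

/-- Knuth relation of type `II_k` : `w' = w · s_i` when
`w(i+1) < w(i+2) < w(i)` or `w(i) < w(i+2) < w(i+1)`. -/
def stepII (k : ℕ) (w w' : Equiv.Perm ℤ) : Prop :=
  ∃ i : ℤ, 1 ≤ i ∧ i ≤ (k : ℤ) - 2 ∧
    ((w (i + 1) < w (i + 2) ∧ w (i + 2) < w i) ∨ (w i < w (i + 2) ∧ w (i + 2) < w (i + 1))) ∧
    w' = w * s i

/-- Knuth relation of type `III_k` : `w' = w · s_i` when `w(i)` and `w(i+1)` have
opposite signs. -/
def stepIII (k : ℕ) (w w' : Equiv.Perm ℤ) : Prop :=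
  ∃ i : ℤ, 1 ≤ i ∧ i ≤ (k : ℤ) - 1 ∧
    ((w i < 0 ∧ 0 < w (i + 1)) ∨ (w (i + 1) < 0 ∧ 0 < w i)) ∧
    w' = w * s i

/-!
On `W_n` the Coxeter length has the closed form (Björner–Brenti, Prop. 8.1.1)
`ℓ(w) = inv(w(1), …, w(n)) - ∑_{w(k) < 0} w(k)`: right multiplication by a generator
changes the right-hand side by at most one, and unless `w = e` some generator decreases it.
Hence `ℓ(w s_i) < ℓ(w)` iff `w(i+1) < w(i)`, and `ℓ(w t_j) < ℓ(w)` iff `w(j) < 0`.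
On `Área_n` the first condition just says `w(i) > 0`, so for `m ≥ n - 1` all of `ρ_m(w)` is
read off from the set `{j ≤ m : w(j) < 0}`: it consists of the `t_j` for `j` in that set and
the `s_i` for `i ≤ n - 1` outside it.
-/

open Equiv Finset

lemma s_apply (i x : ℤ) (hi : 1 ≤ i) :
    s i x = if x = i then i + 1 else if x = i + 1 then i
      else if x = -i then -(i + 1) else if x = -(i + 1) then -i else x := by
  simp only [s, Perm.mul_apply, swap_apply_def]
  split_ifs <;> omega

lemma s_apply_of_pos {i x : ℤ} (hi : 1 ≤ i) (hx : 1 ≤ x) : s i x = swap i (i + 1) x := by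
  rw [s_apply i x hi, swap_apply_def]
  split_ifs <;> omega

lemma s_mul_self {i : ℤ} (hi : 1 ≤ i) : s i * s i = 1 := by
  ext x
  simp only [Perm.mul_apply, Perm.one_apply, s_apply _ _ hi]
  split_ifs <;> omega

lemma desc_one_succ (k : ℕ) : desc 1 (k + 1) = s (k + 1) * desc 1 k := by
  simp [desc, List.range_succ_eq_map, ← List.map_eq_flatMap, Function.comp_def]

lemma desc_one_apply (k : ℕ) : desc 1 k 1 = k + 1 ∧ desc 1 k (-1) = -(k + 1) := by
  induction k with
  | zero => simp [desc]
  | succ k ih =>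
    simp only [desc_one_succ, Perm.mul_apply, ih, s_apply _ _ (by omega : (1 : ℤ) ≤ k + 1)]
    push_cast
    split_ifs <;> omega

lemma tt_eq_swap {j : ℕ} (hj : 1 ≤ j) : tt j = swap (j : ℤ) (-j) := by
  obtain ⟨k, rfl⟩ := Nat.exists_eq_add_of_le' hj
  rw [tt, t, Nat.add_sub_cancel, ← swap_apply_apply, (desc_one_apply _).1, (desc_one_apply _).2]
  push_cast
  rfl

lemma tt_one : tt 1 = t := tt_eq_swap le_rfl

section W
variable {n : ℕ} {w : Perm ℤ}

lemma mul_mem_W {u v : Perm ℤ} (hu : u ∈ W n) (hv : v ∈ W n) : u * v ∈ W n :=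
  ⟨fun i => by simp only [Perm.mul_apply, hv.1, hu.1],
   fun i hi => by simp only [Perm.mul_apply, hv.2 i hi, hu.2 i hi]⟩

lemma inv_mem_W (hw : w ∈ W n) : w⁻¹ ∈ W n :=
  ⟨fun i => by rw [Perm.inv_eq_iff_eq, hw.1, Perm.coe_inv, apply_symm_apply],
   fun i hi => by rw [Perm.inv_eq_iff_eq, hw.2 i hi]⟩

lemma one_mem_W (n : ℕ) : (1 : Perm ℤ) ∈ W n := ⟨fun _ => rfl, fun _ _ => rfl⟩

lemma s_mem_W {i : ℤ} (h1 : 1 ≤ i) (h2 : i < n) : s i ∈ W n := by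
  refine ⟨fun x => ?_, fun x hx => ?_⟩ <;> simp only [s_apply _ _ h1]
  · split_ifs <;> omega
  · rw [lt_abs] at hx
    split_ifs <;> omega

lemma swap_neg_mem_W {j : ℤ} (h1 : 1 ≤ j) (h2 : j ≤ n) : swap j (-j) ∈ W n := by
  refine ⟨fun x => ?_, fun x hx => ?_⟩ <;> simp only [swap_apply_def]
  · split_ifs <;> omega
  · rw [lt_abs] at hx
    split_ifs <;> omega

lemma gens_subset_W (hn : 1 ≤ n) : gens n ⊆ W n := by
  rintro g (rfl | ⟨i, hi1, hi2, rfl⟩)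
  · exact swap_neg_mem_W le_rfl (by exact_mod_cast hn)
  · exact s_mem_W (by exact_mod_cast hi1) (by omega)

lemma gen_mul_self {g : Perm ℤ} (hg : g ∈ gens n) : g * g = 1 := by
  rcases hg with rfl | ⟨i, hi, -, rfl⟩
  · exact swap_mul_self _ _
  · exact s_mul_self (by exact_mod_cast hi)

lemma apply_zero_of_mem_W (hw : w ∈ W n) : w 0 = 0 := by
  have := hw.1 0
  simp only [neg_zero] at this
  omega

lemma apply_ne_zero_of_mem_W (hw : w ∈ W n) {k : ℤ} (hk : k ≠ 0) : w k ≠ 0 := by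
  rw [← apply_zero_of_mem_W hw]
  exact w.injective.ne hk

lemma abs_apply_abs_of_mem_W (hw : w ∈ W n) (x : ℤ) : |w (|x|)| = |w x| := by
  rcases abs_cases x with ⟨h, -⟩ | ⟨h, -⟩ <;> rw [h]
  rw [hw.1, abs_neg]

lemma abs_apply_mem_Icc (hw : w ∈ W n) {k : ℤ} (hk : k ∈ Icc 1 (n : ℤ)) :
    |w k| ∈ Icc 1 (n : ℤ) := by
  rw [mem_Icc] at hk ⊢
  have h0 : w k ≠ 0 := apply_ne_zero_of_mem_W hw (by omega)
  refine ⟨Int.one_le_abs h0, not_lt.mp fun h => ?_⟩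
  have hk' : w k = k := w.injective (hw.2 (w k) h)
  rw [hk', abs_of_pos (by omega)] at h
  omega

end W

section lengthB
variable {n : ℕ} {w : Perm ℤ} {j : ℤ}

noncomputable def invCount (n : ℕ) (w : Perm ℤ) : ℕ :=
  #{pq ∈ Icc 1 (n : ℤ) ×ˢ Icc 1 (n : ℤ) | pq.1 < pq.2 ∧ w pq.2 < w pq.1}

noncomputable def negSum (n : ℕ) (w : Perm ℤ) : ℕ := ∑ k ∈ Icc 1 (n : ℤ), (-w k).toNat

noncomputable def lengthB (n : ℕ) (w : Perm ℤ) : ℕ := invCount n w + negSum n w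

lemma card_abs_apply_lt (hw : w ∈ W n) {a : ℤ} (ha : a ≤ n + 1) :
    #{k ∈ Icc 1 (n : ℤ) | |w k| < a} = (a - 1).toNat := by
  have hw' := inv_mem_W hw
  rw [← Int.card_Ico]
  refine card_nbij' (fun k => |w k|) (fun b => |w⁻¹ b|) (fun k hk => ?_) (fun b hb => ?_)
    (fun k hk => ?_) (fun b hb => ?_)
  · simp only [coe_filter, Set.mem_ofPred_eq] at hk
    have := mem_Icc.mp (abs_apply_mem_Icc hw hk.1)
    simp only [coe_Ico, Set.mem_Ico]
    omega
  · simp only [coe_Ico, Set.mem_Ico] at hb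
    simp only [coe_filter, Set.mem_ofPred_eq]
    refine ⟨abs_apply_mem_Icc hw' (mem_Icc.mpr ⟨hb.1, by omega⟩), ?_⟩
    rw [abs_apply_abs_of_mem_W hw, Perm.coe_inv, apply_symm_apply, abs_of_pos (by omega)]
    exact hb.2
  · simp only [coe_filter, Set.mem_ofPred_eq, mem_Icc] at hk
    dsimp only
    rw [abs_apply_abs_of_mem_W hw', Perm.coe_inv, symm_apply_apply, abs_of_pos (by omega)]
  · simp only [coe_Ico, Set.mem_Ico] at hb
    dsimp only
    rw [abs_apply_abs_of_mem_W hw, Perm.coe_inv, apply_symm_apply, abs_of_pos (by omega)]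

lemma lengthB_mul_s {i : ℤ} (h1 : 1 ≤ i) (h2 : i < n) :
    lengthB n (w * s i) + (if w (i + 1) < w i then 1 else 0)
      = lengthB n w + (if w i < w (i + 1) then 1 else 0) := by
  -- `swap i (i + 1)` preserves the relative order of every pair of positions except `i, i + 1`.
  have key : ∀ pq ∈ Icc 1 (n : ℤ) ×ˢ Icc 1 (n : ℤ),
      (if swap i (i + 1) pq.1 < swap i (i + 1) pq.2 ∧ w pq.2 < w pq.1 then 1 else 0)
        + (if pq = (i, i + 1) then (if w (i + 1) < w i then 1 else 0) else 0)
      = (if pq.1 < pq.2 ∧ w pq.2 < w pq.1 then 1 else 0)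
        + (if pq = (i + 1, i) then (if w i < w (i + 1) then 1 else 0) else 0) := by
    rintro ⟨p, q⟩ -
    simp only [swap_apply_def, Prod.mk.injEq]
    split_ifs <;> subst_vars <;> omega
  set σ := swap i (i + 1)
  have hσ : ∀ k, k ∈ Icc 1 (n : ℤ) ↔ σ k ∈ Icc 1 (n : ℤ) := fun k => by
    simp only [σ, mem_Icc, swap_apply_def]
    split_ifs <;> omega
  have happly : ∀ k ∈ Icc 1 (n : ℤ), (w * s i) k = w (σ k) := fun k hk => by
    rw [Perm.mul_apply, s_apply_of_pos h1 (mem_Icc.mp hk).1]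
  have hneg : negSum n (w * s i) = negSum n w :=
    sum_equiv σ hσ fun k hk => by rw [happly k hk]
  have hinv : invCount n (w * s i) = #{pq ∈ Icc 1 (n : ℤ) ×ˢ Icc 1 (n : ℤ) |
      σ pq.1 < σ pq.2 ∧ w pq.2 < w pq.1} := by
    refine card_equiv (σ.prodCongr σ) fun pq => ?_
    simp only [mem_filter, mem_product, prodCongr_apply, Prod.map_fst, Prod.map_snd, σ,
      swap_apply_self, ← hσ]
    exact and_congr_right fun h => by rw [happly _ h.1, happly _ h.2]
  have hmem : (i, i + 1) ∈ Icc 1 (n : ℤ) ×ˢ Icc 1 (n : ℤ) := by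
    simp only [mem_product, mem_Icc]; omega
  have hmem' : (i + 1, i) ∈ Icc 1 (n : ℤ) ×ˢ Icc 1 (n : ℤ) := by
    simp only [mem_product, mem_Icc]; omega
  have hsum := sum_congr rfl key
  rw [sum_add_distrib, sum_add_distrib, sum_ite_eq', sum_ite_eq', ← card_filter, ← card_filter,
    if_pos hmem, if_pos hmem'] at hsum
  rw [lengthB, lengthB, hneg, hinv, invCount]
  omega

lemma mul_swap_neg_apply (hw : w ∈ W n) {k : ℤ} (hj : 1 ≤ j) (hk : 1 ≤ k) :
    (w * swap j (-j)) k = if k = j then -w j else w k := by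
  rw [Perm.mul_apply, swap_apply_def]
  split_ifs with h1 h2
  · exact hw.1 j
  · omega
  · rfl

lemma negSum_mul_swap_neg (hw : w ∈ W n) (hj : j ∈ Icc 1 (n : ℤ)) (hpos : 0 < w j) :
    negSum n (w * swap j (-j)) = negSum n w + (w j).toNat :=
  calc negSum n (w * swap j (-j))
      = ∑ k ∈ Icc 1 (n : ℤ), ((-w k).toNat + if k = j then (w j).toNat else 0) := by
        refine sum_congr rfl fun k hk => ?_
        rw [mul_swap_neg_apply hw (mem_Icc.mp hj).1 (mem_Icc.mp hk).1]
        split_ifs with h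
        · subst h; omega
        · omega
    _ = _ := by rw [sum_add_distrib, sum_ite_eq', if_pos hj, negSum]

lemma invCount_mul_swap_neg (hw : w ∈ W n) (hj : j ∈ Icc 1 (n : ℤ)) (hpos : 0 < w j) :
    invCount n (w * swap j (-j)) + #{q ∈ Icc 1 (n : ℤ) | j < q ∧ |w q| < w j}
      = invCount n w + #{p ∈ Icc 1 (n : ℤ) | p < j ∧ |w p| < w j} := by
  have hj1 := (mem_Icc.mp hj).1
  have hne : ∀ k, 1 ≤ k → k ≠ j → w k ≠ w j ∧ w k ≠ -w j := fun k hk hkj =>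
    ⟨w.injective.ne hkj, by rw [← hw.1]; exact w.injective.ne (by omega)⟩
  have key : ∀ pq ∈ Icc 1 (n : ℤ) ×ˢ Icc 1 (n : ℤ),
      (if pq.1 < pq.2 ∧ (w * swap j (-j)) pq.2 < (w * swap j (-j)) pq.1 then 1 else 0)
        + (if pq.1 = j then (if j < pq.2 ∧ |w pq.2| < w j then 1 else 0) else 0)
      = (if pq.1 < pq.2 ∧ w pq.2 < w pq.1 then 1 else 0)
        + (if pq.2 = j then (if pq.1 < j ∧ |w pq.1| < w j then 1 else 0) else 0) := by
    rintro ⟨p, q⟩ hpq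
    simp only [mem_product, mem_Icc] at hpq
    have := hne p hpq.1.1
    have := hne q hpq.2.1
    simp only [mul_swap_neg_apply hw hj1 hpq.1.1, mul_swap_neg_apply hw hj1 hpq.2.1]
    rcases abs_cases (w p) with ⟨hp, hp'⟩ | ⟨hp, hp'⟩ <;>
      rcases abs_cases (w q) with ⟨hq, hq'⟩ | ⟨hq, hq'⟩ <;>
      split_ifs <;> subst_vars <;> omega
  have hsum := sum_congr rfl key
  simp only [sum_add_distrib, sum_product, sum_ite_irrel, sum_const_zero, sum_ite_eq',
    if_pos hj] at hsum
  simpa only [invCount, card_filter, sum_product] using hsum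

lemma lengthB_mul_swap_neg (hw : w ∈ W n) (hj : j ∈ Icc 1 (n : ℤ)) (hpos : 0 < w j) :
    lengthB n (w * swap j (-j))
      = lengthB n w + 1 + 2 * #{p ∈ Icc 1 (n : ℤ) | p < j ∧ |w p| < w j} := by
  have hsplit : #{p ∈ Icc 1 (n : ℤ) | p < j ∧ |w p| < w j}
      + #{q ∈ Icc 1 (n : ℤ) | j < q ∧ |w q| < w j} = (w j - 1).toNat := by
    have hwj := abs_of_pos hpos ▸ mem_Icc.mp (abs_apply_mem_Icc hw hj)
    rw [← card_abs_apply_lt hw (by omega), card_filter, card_filter, card_filter,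
      ← sum_add_distrib]
    refine sum_congr rfl fun k _ => ?_
    rcases eq_or_ne k j with rfl | hkj
    · simp [abs_of_pos hpos]
    · split_ifs <;> omega
  have := invCount_mul_swap_neg hw hj hpos
  rw [lengthB, lengthB, negSum_mul_swap_neg hw hj hpos]
  omega

lemma lengthB_mul_swap_neg_lt (hw : w ∈ W n) (hj : j ∈ Icc 1 (n : ℤ)) (hneg : w j < 0) :
    lengthB n (w * swap j (-j)) < lengthB n w := by
  obtain ⟨hj1, hjn⟩ := mem_Icc.mp hj
  have hu : (w * swap j (-j)) j = -w j := by rw [mul_swap_neg_apply hw hj1 hj1, if_pos rfl]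
  have h := lengthB_mul_swap_neg (mul_mem_W hw (swap_neg_mem_W hj1 hjn)) hj (by omega)
  rw [mul_assoc, swap_mul_self, mul_one] at h
  omega

lemma lengthB_one : lengthB n 1 = 0 := by
  have hinv : invCount n 1 = 0 := card_eq_zero.mpr <| filter_eq_empty_iff.mpr fun pq _ h => by
    simp only [Perm.one_apply] at h
    omega
  have hneg : negSum n 1 = 0 := sum_eq_zero fun k hk => by
    simp only [Perm.one_apply]
    have := (mem_Icc.mp hk).1
    omega
  rw [lengthB, hinv, hneg]

lemma lengthB_mul_gen_le (hn : 1 ≤ n) (hw : w ∈ W n) {g : Perm ℤ} (hg : g ∈ gens n) :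
    lengthB n (w * g) ≤ lengthB n w + 1 := by
  have h1 : (1 : ℤ) ∈ Icc 1 (n : ℤ) := mem_Icc.mpr ⟨le_rfl, by exact_mod_cast hn⟩
  rcases hg with rfl | ⟨i, hi1, hi2, rfl⟩
  · rcases (apply_ne_zero_of_mem_W hw one_ne_zero).lt_or_gt with h | h
    · exact (lengthB_mul_swap_neg_lt hw h1 h).le.trans (Nat.le_succ _)
    · have hnone : ∀ p ∈ Icc 1 (n : ℤ), ¬(p < 1 ∧ |w p| < w 1) := fun p hp h' => by
        have := (mem_Icc.mp hp).1
        omega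
      rw [t, lengthB_mul_swap_neg hw h1 h, filter_false_of_mem hnone, card_empty]
  · have := lengthB_mul_s (n := n) (w := w) (i := (i : ℤ)) (by exact_mod_cast hi1) (by omega)
    split_ifs at this <;> omega

lemma lengthB_mul_prod_le (hn : 1 ≤ n) (hw : w ∈ W n) {l : List (Perm ℤ)}
    (hl : ∀ g ∈ l, g ∈ gens n) : lengthB n (w * l.prod) ≤ lengthB n w + l.length := by
  induction l generalizing w with
  | nil => simp
  | cons g l ih =>
    have hg := hl g List.mem_cons_self
    rw [List.prod_cons, ← mul_assoc, List.length_cons]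
    have := ih (mul_mem_W hw (gens_subset_W hn hg)) fun g' hg' =>
      hl g' (List.mem_cons_of_mem _ hg')
    have := lengthB_mul_gen_le hn hw hg
    omega

lemma eq_one_of_forall_apply_eq (hw : w ∈ W n) (h : ∀ k ∈ Icc 1 (n : ℤ), w k = k) :
    w = 1 := by
  ext x
  rw [Perm.one_apply]
  by_cases hx : (n : ℤ) < |x|
  · exact hw.2 x hx
  rcases lt_trichotomy x 0 with hx0 | rfl | hx0
  · rw [not_lt, abs_le] at hx
    rw [← neg_neg x, hw.1, h (-x) (mem_Icc.mpr (by omega))]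
  · exact apply_zero_of_mem_W hw
  · exact h x (mem_Icc.mpr (by rw [abs_of_pos hx0] at hx; omega))

lemma eq_one_of_apply_lt_apply_succ (hw : w ∈ W n) (hpos : 0 < w 1)
    (hmono : ∀ i : ℤ, 1 ≤ i → i < n → w i < w (i + 1)) : w = 1 := by
  have hgap : ∀ k l : ℤ, 1 ≤ k → k ≤ l → l ≤ n → w k - k ≤ w l - l := by
    intro k l hk hkl
    induction l, hkl using Int.leInduction with
    | base => intro; exact le_rfl
    | succ l hkl ih =>
      intro hl
      have := hmono l (by omega) (by omega)
      have := ih (by omega)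
      omega
  refine eq_one_of_forall_apply_eq hw fun k hk => ?_
  have hk := mem_Icc.mp hk
  have hwn := abs_le.mp (mem_Icc.mp
    (abs_apply_mem_Icc hw (mem_Icc.mpr ⟨hk.1.trans hk.2, le_rfl⟩))).2
  have := hgap 1 k le_rfl hk.1 hk.2
  have := hgap k n hk.1 hk.2 le_rfl
  omega

lemma exists_gen_lengthB_mul_lt (hn : 1 ≤ n) (hw : w ∈ W n) (hne : w ≠ 1) :
    ∃ g ∈ gens n, lengthB n (w * g) < lengthB n w := by
  by_contra! h
  refine hne (eq_one_of_apply_lt_apply_succ hw ?_ fun i hi1 hi2 => ?_)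
  · by_contra! h1
    have := lengthB_mul_swap_neg_lt hw (mem_Icc.mpr ⟨le_rfl, by exact_mod_cast hn⟩)
      (lt_of_le_of_ne h1 (apply_ne_zero_of_mem_W hw one_ne_zero))
    exact this.not_ge (h t (Set.mem_insert _ _))
  · have hs := lengthB_mul_s (w := w) hi1 hi2
    have hgen := h (s i)
      (Or.inr ⟨i.toNat, by omega, by omega, by rw [Int.toNat_of_nonneg (by omega)]⟩)
    have := w.injective.ne (show i ≠ i + 1 by omega)
    split_ifs at hs <;> omega

lemma exists_word_length_le (hn : 1 ≤ n) (hw : w ∈ W n) :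
    ∃ l : List (Perm ℤ), (∀ g ∈ l, g ∈ gens n) ∧ l.prod = w ∧
      l.length ≤ lengthB n w := by
  induction hN : lengthB n w using Nat.strong_induction_on generalizing w with
  | _ N ih =>
    by_cases h1 : w = 1
    · exact ⟨[], by simp, by simp [h1], by simp⟩
    obtain ⟨g, hg, hlt⟩ := exists_gen_lengthB_mul_lt hn hw h1
    obtain ⟨l, hl, hprod, hlen⟩ := ih _ (hN ▸ hlt) (mul_mem_W hw (gens_subset_W hn hg)) rfl
    refine ⟨l ++ [g], fun g' hg' => ?_, ?_, ?_⟩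
    · rcases List.mem_append.mp hg' with hg' | hg'
      · exact hl g' hg'
      · rwa [List.mem_singleton.mp hg']
    · rw [List.prod_append, hprod, List.prod_singleton, mul_assoc, gen_mul_self hg, mul_one]
    · rw [List.length_append, List.length_singleton]
      omega

theorem len_eq_lengthB (hn : 1 ≤ n) (hw : w ∈ W n) : len n w = lengthB n w := by
  obtain ⟨l, hl, hprod, hlen⟩ := exists_word_length_le hn hw
  have hmem : l.length ∈
      {k | ∃ l : List (Perm ℤ), l.length = k ∧ (∀ g ∈ l, g ∈ gens n) ∧ l.prod = w} :=
    ⟨l, rfl, hl, hprod⟩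
  obtain ⟨l', hlen', hl', hprod'⟩ := Nat.sInf_mem ⟨_, hmem⟩
  have := lengthB_mul_prod_le hn (one_mem_W n) hl'
  rw [one_mul, hprod', lengthB_one, hlen'] at this
  exact le_antisymm ((Nat.sInf_le hmem).trans hlen) (by rw [len]; omega)

end lengthB

section descents
variable {n : ℕ} {w : Perm ℤ}

lemma len_mul_s_lt_iff (hw : w ∈ W n) {i : ℤ} (h1 : 1 ≤ i) (h2 : i < n) :
    len n (w * s i) < len n w ↔ w (i + 1) < w i := by
  have hn : 1 ≤ n := by omega
  rw [len_eq_lengthB hn (mul_mem_W hw (s_mem_W h1 h2)), len_eq_lengthB hn hw]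
  have hs := lengthB_mul_s (w := w) h1 h2
  have := w.injective.ne (show i ≠ i + 1 by omega)
  split_ifs at hs <;> omega

lemma len_mul_tt_lt_iff (hw : w ∈ W n) {j : ℕ} (hj1 : 1 ≤ j) (hjn : j ≤ n) :
    len n (w * tt j) < len n w ↔ w j < 0 := by
  have hj : (j : ℤ) ∈ Icc 1 (n : ℤ) := mem_Icc.mpr ⟨by omega, by omega⟩
  have hwj := mul_mem_W hw (swap_neg_mem_W (mem_Icc.mp hj).1 (mem_Icc.mp hj).2)
  rw [tt_eq_swap hj1, len_eq_lengthB (hj1.trans hjn) hwj, len_eq_lengthB (hj1.trans hjn) hw]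
  refine ⟨fun h => ?_, lengthB_mul_swap_neg_lt hw hj⟩
  rcases (apply_ne_zero_of_mem_W hw (show (j : ℤ) ≠ 0 by omega)).lt_or_gt with hneg | hpos
  · exact hneg
  · rw [lengthB_mul_swap_neg hw hj hpos] at h
    omega

lemma lt_iff_pos_of_mem_Area (hw : w ∈ Area n) {i : ℤ} (h1 : 1 ≤ i) (h2 : i < n) :
    w (i + 1) < w i ↔ 0 < w i := by
  obtain ⟨hneg, hpos⟩ := hw.2 i (i + 1) h1 (by omega) (by omega)
  rcases (apply_ne_zero_of_mem_W hw.1 (show i ≠ 0 by omega)).lt_or_gt with h | h <;>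
    rcases (apply_ne_zero_of_mem_W hw.1 (show i + 1 ≠ 0 by omega)).lt_or_gt with h' | h'
  · have := hneg h h'; omega
  · omega
  · omega
  · have := hpos h h'; omega

lemma tt_inj {j k : ℕ} (hj : 1 ≤ j) (hk : 1 ≤ k) : tt j = tt k ↔ j = k := by
  refine ⟨fun h => ?_, fun h => h ▸ rfl⟩
  have := congrArg (· (j : ℤ)) h
  simp only [tt_eq_swap hj, tt_eq_swap hk, swap_apply_left, swap_apply_def] at this
  split_ifs at this <;> omega

lemma tt_not_mem_gens {j : ℕ} (hj : 2 ≤ j) : tt j ∉ gens n := by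
  have h : tt j j = -j := by rw [tt_eq_swap (by omega), swap_apply_left]
  rintro (h' | ⟨i, hi, -, h'⟩) <;> rw [h'] at h
  · rw [t, swap_apply_of_ne_of_ne (by omega) (by omega)] at h
    omega
  · rw [s_apply_of_pos (by exact_mod_cast hi) (by omega), swap_apply_def] at h
    split_ifs at h <;> omega

def tDescents (n m : ℕ) (w : Perm ℤ) : Set ℕ :=
  {j | 1 ≤ j ∧ j ≤ m ∧ len n (w * tt j) < len n w}

lemma tt_mem_rho_iff {m : ℕ} (hm : 1 ≤ m) {j : ℕ} (hj : 1 ≤ j) :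
    tt j ∈ rho n m w ↔ j ∈ tDescents n m w := by
  rcases hj.eq_or_lt with rfl | hj2
  · refine ⟨?_, fun h => Or.inl ⟨Set.mem_insert _ _, tt_one ▸ h.2.2⟩⟩
    rintro (⟨-, h⟩ | ⟨j, hj2, -, h, -⟩)
    · exact ⟨le_rfl, hm, h⟩
    · exact absurd (h ▸ Set.mem_insert _ _) (tt_not_mem_gens hj2 (n := n))
  · refine ⟨?_, fun h => Or.inr ⟨j, hj2, h.2.1, rfl, h.2.2⟩⟩
    rintro (⟨h, -⟩ | ⟨k, hk2, hkm, h, hlt⟩)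
    · exact absurd h (tt_not_mem_gens hj2)
    · obtain rfl := (tt_inj hj (by omega)).mp h
      exact ⟨hj, hkm, hlt⟩

lemma tDescents_eq_setOf_tt_mem_rho {m : ℕ} (hm : 1 ≤ m) :
    tDescents n m w = {j | 1 ≤ j ∧ tt j ∈ rho n m w} :=
  Set.ext fun _ => ⟨fun h => ⟨h.1, (tt_mem_rho_iff hm h.1).mpr h⟩,
    fun h => (tt_mem_rho_iff hm h.1).mp h.2⟩

lemma len_mul_s_lt_iff_not_mem_tDescents (hw : w ∈ Area n) {m : ℕ} (hm : n - 1 ≤ m) {i : ℕ}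
    (hi1 : 1 ≤ i) (hi2 : i ≤ n - 1) : len n (w * s i) < len n w ↔ i ∉ tDescents n m w := by
  have h1 : (1 : ℤ) ≤ i := by exact_mod_cast hi1
  have h2 : (i : ℤ) < n := by omega
  rw [len_mul_s_lt_iff hw.1 h1 h2, lt_iff_pos_of_mem_Area hw h1 h2, tDescents, Set.mem_ofPred_eq,
    len_mul_tt_lt_iff hw.1 hi1 (by omega)]
  have := apply_ne_zero_of_mem_W hw.1 (show (i : ℤ) ≠ 0 by omega)
  omega

lemma rho_eq_of_mem_Area (hw : w ∈ Area n) {m : ℕ} (hm : n - 1 ≤ m) (hm1 : 1 ≤ m) :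
    rho n m w = tt '' tDescents n m w
      ∪ (fun i : ℕ => s i) '' {i | 1 ≤ i ∧ i ≤ n - 1 ∧ i ∉ tDescents n m w} := by
  ext g
  constructor
  · rintro (⟨rfl | ⟨i, hi1, hi2, rfl⟩, hlt⟩ | ⟨j, hj2, hjm, rfl, hlt⟩)
    · exact Or.inl ⟨1, ⟨le_rfl, hm1, by rwa [tt_one]⟩, tt_one⟩
    · exact Or.inr
        ⟨i, ⟨hi1, hi2, (len_mul_s_lt_iff_not_mem_tDescents hw hm hi1 hi2).mp hlt⟩, rfl⟩
    · exact Or.inl ⟨j, ⟨by omega, hjm, hlt⟩, rfl⟩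
  · rintro (⟨j, hj, rfl⟩ | ⟨i, ⟨hi1, hi2, hi⟩, rfl⟩)
    · exact (tt_mem_rho_iff hm1 hj.1).mpr hj
    · exact Or.inl ⟨Or.inr ⟨i, hi1, hi2, rfl⟩,
        (len_mul_s_lt_iff_not_mem_tDescents hw hm hi1 hi2).mpr hi⟩

end descents

theorem statement8 (n m : ℕ) (hn : 2 ≤ n) (hm : m = n - 1 ∨ m = n)
    (y w : Equiv.Perm ℤ) (hy : y ∈ Area n) (hw : w ∈ Area n) :
    rho n m y = rho n m w ↔
      {j : ℕ | 1 ≤ j ∧ j ≤ m ∧ len n (y * tt j) < len n y}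
        = {j : ℕ | 1 ≤ j ∧ j ≤ m ∧ len n (w * tt j) < len n w} := by
  have hm1 : 1 ≤ m := by omega
  change rho n m y = rho n m w ↔ tDescents n m y = tDescents n m w
  constructor
  · intro h
    rw [tDescents_eq_setOf_tt_mem_rho hm1, tDescents_eq_setOf_tt_mem_rho hm1, h]
  · intro h
    rw [rho_eq_of_mem_Area hy (by omega) hm1, rho_eq_of_mem_Area hw (by omega) hm1, h]

end BnPaper
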